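/- arXiv:2412.19742 — 5 statements merged into one kernel-verified Lean document; each statement's English description precedes it below -/
import Mathlib

section
/- Let G be a finite group, H ≤ G, and let L be a left ideal of ℂ[G] such that π_H(L) ⊆ L, where π_H is the linear projection onto the span of H (keeping only coefficients at elements of H). Let U = π_H(L). Then U is a left ideal of ℂ[H], L = ℂ[G]·U, and L = ⊕_{b ∈ G/H} b·U (direct sum over a set of representatives b of the left cosets of H in G). -/
open scoped Classical

/-- The projection `π_H : ℂ[G] → ℂ[G]` keeping only the coefficients at elements of `H`. -/
noncomputable def piSub {G : Type*} [Group G] [Fintype G] (H : Subgroup G)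
    (a : MonoidAlgebra ℂ G) : MonoidAlgebra ℂ G :=
  ∑ h : H, MonoidAlgebra.single (h : G) (a.coeff (h : G))

/-!
Every `a : ℂ[G]` is the sum of its restrictions to the left cosets of `H`, uniquely among
families whose `q`-th member is supported on the coset `q`; the restriction to the coset `bH`
is `b · π_H (b⁻¹ a)`. Since `L` is a left ideal stable under `π_H`, these restrictions of
an element of `L` lie in `b · U`, and conversely every element of `b · U` is an element of `L`
supported on `bH`. Closure of `U` under `ℂ[H]` holds because products of elements supported
on `H` are supported on `H · H = H`.
-/

open scoped Pointwise

namespace MonoidAlgebra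

variable {k G : Type*} [Semiring k]

noncomputable def restrict (s : Set G) (x : MonoidAlgebra k G) : MonoidAlgebra k G :=
  ofCoeff (x.coeff.filter (· ∈ s))

@[simp]
lemma coeff_restrict_apply (s : Set G) (x : MonoidAlgebra k G) (g : G) :
    (restrict s x).coeff g = if g ∈ s then x.coeff g else 0 :=
  Finsupp.filter_apply ..

lemma mem_supported_iff_coeff_ne_zero {s : Set G} {x : MonoidAlgebra k G} :
    x ∈ supported k k s ↔ ∀ g, x.coeff g ≠ 0 → g ∈ s := by
  simp [mem_supported, Set.subset_def]

lemma restrict_mem_supported (s : Set G) (x : MonoidAlgebra k G) :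
    restrict s x ∈ supported k k s :=
  mem_supported'.2 fun _ hg => by simp [hg]

lemma restrict_eq_self {s : Set G} {x : MonoidAlgebra k G} (hx : x ∈ supported k k s) :
    restrict s x = x :=
  ext ((Finsupp.filter_eq_self_iff _ _).2 (mem_supported_iff_coeff_ne_zero.1 hx))

lemma restrict_eq_zero {s t : Set G} {x : MonoidAlgebra k G} (hx : x ∈ supported k k t)
    (hst : Disjoint s t) : restrict s x = 0 :=
  coeff_eq_zero.1 <| (Finsupp.filter_eq_zero_iff _ _).2 fun _ hg =>
    mem_supported'.1 hx _ (Set.disjoint_left.1 hst hg)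

lemma restrict_sum {ι : Type*} (s : Set G) (I : Finset ι) (f : ι → MonoidAlgebra k G) :
    restrict s (∑ i ∈ I, f i) = ∑ i ∈ I, restrict s (f i) := by
  simp only [restrict, coeff_sum, Finsupp.filter_sum, ofCoeff_sum]

lemma sum_restrict_fiber {ι : Type*} [Fintype ι] (f : G → ι) (x : MonoidAlgebra k G) :
    ∑ i, restrict (f ⁻¹' {i}) x = x := by
  ext g
  simp [coeff_sum]

lemma eq_restrict_fiber_sum {ι : Type*} [Fintype ι] (f : G → ι) (c : ι → MonoidAlgebra k G)
    (hc : ∀ i, c i ∈ supported k k (f ⁻¹' {i})) (i : ι) :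
    c i = restrict (f ⁻¹' {i}) (∑ j, c j) := by
  rw [restrict_sum, Finset.sum_eq_single i, restrict_eq_self (hc i)]
  · intro j _ hji
    exact restrict_eq_zero (hc j) ((Set.disjoint_singleton.2 hji.symm).preimage f)
  · simp

lemma mul_mem_supported [Mul G] {s t : Set G} {x y : MonoidAlgebra k G}
    (hx : x ∈ supported k k s) (hy : y ∈ supported k k t) : x * y ∈ supported k k (s * t) :=
  mem_supported.2 <| (Finset.coe_subset.2 (support_coeff_mul_subset x y)).trans <| by
    rw [Finset.coe_mul]; exact Set.mul_subset_mul hx hy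

lemma single_mem_supported (g : G) (r : k) : single g r ∈ supported k k {g} :=
  mem_supported'.2 fun _ hg => by simp [coeff_single, Ne.symm hg]

lemma single_one_mul_restrict [Group G] (g : G) (s : Set G) (x : MonoidAlgebra k G) :
    single g 1 * restrict s x = restrict (g • s) (single g 1 * x) := by
  ext h
  simp [Set.mem_smul_set_iff_inv_smul_mem]

end MonoidAlgebra

open MonoidAlgebra

lemma QuotientGroup.preimage_mk_singleton_mk {G : Type*} [Group G] (H : Subgroup G) (g : G) :
    QuotientGroup.mk ⁻¹' {(g : G ⧸ H)} = g • (H : Set G) := by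
  ext x
  simp [mem_leftCoset_iff, QuotientGroup.eq, eq_comm]

section piSub

variable {G : Type*} [Group G] [Fintype G] (H : Subgroup G)

lemma piSub_eq_restrict (a : MonoidAlgebra ℂ G) : piSub H a = restrict H a := by
  ext g
  simp only [piSub, coeff_sum, coeff_single, Finsupp.finsetSum_apply, Finsupp.single_apply,
    coeff_restrict_apply, SetLike.mem_coe]
  split_ifs with hg
  · rw [Finset.sum_eq_single ⟨g, hg⟩ (fun h _ hne => if_neg fun hc => hne (Subtype.ext hc))
      (by simp), if_pos rfl]
  · exact Finset.sum_eq_zero fun h _ => if_neg fun (hc : (h : G) = g) => hg (hc ▸ h.2)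

variable {H} {L : Ideal (MonoidAlgebra ℂ G)}

lemma mem_piSub_image_iff (hL : ∀ a ∈ L, piSub H a ∈ L) {u : MonoidAlgebra ℂ G} :
    u ∈ piSub H '' L ↔ u ∈ L ∧ u ∈ supported ℂ ℂ H := by
  constructor
  · rintro ⟨a, ha, rfl⟩
    exact ⟨hL a ha, piSub_eq_restrict H a ▸ restrict_mem_supported _ a⟩
  · rintro ⟨hu, hsupp⟩
    exact ⟨u, hu, (piSub_eq_restrict H u).trans (restrict_eq_self hsupp)⟩

lemma of_mul_piSub_inv_mul_eq_restrict (g : G) (a : MonoidAlgebra ℂ G) :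
    of ℂ G g * piSub H (of ℂ G g⁻¹ * a) = restrict (QuotientGroup.mk ⁻¹' {(g : G ⧸ H)}) a := by
  rw [piSub_eq_restrict, of_apply, single_one_mul_restrict, of_apply, ← mul_assoc,
    single_mul_single, mul_inv_cancel, one_mul, ← one_def, one_mul,
    QuotientGroup.preimage_mk_singleton_mk]

lemma mem_of_mul_piSub_image_iff (hL : ∀ a ∈ L, piSub H a ∈ L) (g : G) {x : MonoidAlgebra ℂ G} :
    x ∈ (of ℂ G g * ·) '' (piSub H '' L) ↔
      x ∈ L ∧ x ∈ supported ℂ ℂ (QuotientGroup.mk ⁻¹' {(g : G ⧸ H)}) := by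
  constructor
  · rintro ⟨u, hu, rfl⟩
    obtain ⟨huL, husupp⟩ := (mem_piSub_image_iff hL).1 hu
    refine ⟨L.mul_mem_left _ huL, ?_⟩
    rw [QuotientGroup.preimage_mk_singleton_mk, ← Set.singleton_smul]
    exact mul_mem_supported (single_mem_supported g 1) husupp
  · rintro ⟨hx, hsupp⟩
    refine ⟨piSub H (of ℂ G g⁻¹ * x), ⟨_, L.mul_mem_left _ hx, rfl⟩, ?_⟩
    change of ℂ G g * _ = x
    rw [of_mul_piSub_inv_mul_eq_restrict, restrict_eq_self hsupp]

theorem mem_iff_existsUnique_coset_decomposition (hL : ∀ a ∈ L, piSub H a ∈ L)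
    (a : MonoidAlgebra ℂ G) :
    a ∈ L ↔ ∃! c : G ⧸ H → MonoidAlgebra ℂ G,
      (∀ q, c q ∈ L ∧ c q ∈ supported ℂ ℂ (QuotientGroup.mk ⁻¹' {q})) ∧ a = ∑ q, c q := by
  constructor
  · intro ha
    refine ⟨fun q => restrict (QuotientGroup.mk ⁻¹' {q}) a,
      ⟨fun q => ⟨?_, restrict_mem_supported _ a⟩, (sum_restrict_fiber _ a).symm⟩, ?_⟩
    · induction q using QuotientGroup.induction_on with
      | H g =>
        show restrict _ a ∈ L
        rw [← of_mul_piSub_inv_mul_eq_restrict (H := H)]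
        exact L.mul_mem_left _ (hL _ (L.mul_mem_left _ ha))
    · rintro c ⟨hc, rfl⟩
      exact funext fun q => eq_restrict_fiber_sum _ c (fun q => (hc q).2) q
  · rintro ⟨c, ⟨hc, rfl⟩, -⟩
    exact L.sum_mem fun q _ => (hc q).1

end piSub

/-- Let `L` be a left ideal of `ℂ[G]` with `π_H(L) ⊆ L`, and set `U = π_H(L)`.  Then
`U` is a left ideal of `ℂ[H]` (i.e. it is closed under left multiplication by elements
of `ℂ[G]` supported on `H`), `L = ℂ[G]·U`, and `L = ⊕_{b ∈ G/H} b·U`, the direct sum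
being over a set of representatives of the left cosets of `H` in `G`. -/
theorem inducedIdeal_structure {G : Type*} [Group G] [Fintype G] (H : Subgroup G)
    (L : Ideal (MonoidAlgebra ℂ G)) (hL : ∀ a ∈ L, piSub H a ∈ L)
    (U : Set (MonoidAlgebra ℂ G)) (hU : U = (fun a => piSub H a) '' L)
    (r : (G ⧸ H) → G) (hr : ∀ q : G ⧸ H, (QuotientGroup.mk (r q) : G ⧸ H) = q) :
    (∀ z : MonoidAlgebra ℂ G, (∀ g : G, z.coeff g ≠ 0 → g ∈ H) → ∀ u ∈ U, z * u ∈ U) ∧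
    L = Ideal.span U ∧
    (∀ a : MonoidAlgebra ℂ G, a ∈ L ↔
      ∃! c : (G ⧸ H) → MonoidAlgebra ℂ G,
        (∀ q : G ⧸ H, c q ∈ (fun u => MonoidAlgebra.of ℂ G (r q) * u) '' U) ∧
          a = ∑ q : G ⧸ H, c q) := by
  subst hU
  have mem_U {u} := mem_piSub_image_iff (H := H) hL (u := u)
  have mem_translate_U (q : G ⧸ H) (x : MonoidAlgebra ℂ G) :
      x ∈ (fun u => of ℂ G (r q) * u) '' (piSub H '' L) ↔
        x ∈ L ∧ x ∈ supported ℂ ℂ (QuotientGroup.mk ⁻¹' {q}) := by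
    simpa only [hr q] using mem_of_mul_piSub_image_iff hL (r q) (x := x)
  have decomposition (a : MonoidAlgebra ℂ G) : a ∈ L ↔ ∃! c : G ⧸ H → MonoidAlgebra ℂ G,
      (∀ q, c q ∈ (fun u => of ℂ G (r q) * u) '' (piSub H '' L)) ∧ a = ∑ q, c q := by
    simpa only [mem_translate_U] using mem_iff_existsUnique_coset_decomposition hL a
  refine ⟨fun z hz u hu => ?_, le_antisymm (fun a ha => ?_) (Ideal.span_le.2 fun u hu => ?_),
    decomposition⟩
  · refine mem_U.2 ⟨L.mul_mem_left z (mem_U.1 hu).1, ?_⟩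
    exact supported_mono (Set.mul_subset_iff.2 fun _ hg _ hh => H.mul_mem hg hh)
      (mul_mem_supported (mem_supported_iff_coeff_ne_zero.2 hz) (mem_U.1 hu).2)
  · obtain ⟨c, ⟨hc, rfl⟩, -⟩ := (decomposition a).1 ha
    refine Ideal.sum_mem _ fun q _ => ?_
    obtain ⟨u, hu, hcu⟩ := hc q
    exact hcu ▸ Ideal.mul_mem_left _ _ (Ideal.subset_span hu)
  · exact (mem_U.1 hu).1
end

section
/- Let G be a finite group and define the ⋆ operation on ℂ[G] by (∑_g x(g) g)⋆ = ∑_g conj(x(g)) g⁻¹. For any idempotent e ∈ ℂ[G], the orthogonal complement of the left ideal ℂ[G]e with respect to the Hermitian inner product ⟨v,w⟩ = |G|⁻¹ ∑_g conj(v(g)) w(g) equals ℂ[G](1 − e⋆). -/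
/-- The conjugate-linear anti-involution `⋆` on `ℂ[G]`:
`(∑ x(g) g)⋆ = ∑ conj(x(g)) g⁻¹`. -/
noncomputable def starElt {G : Type*} [Group G] [Fintype G]
    (x : MonoidAlgebra ℂ G) : MonoidAlgebra ℂ G :=
  ∑ g : G, MonoidAlgebra.single g⁻¹ (starRingEnd ℂ (x.coeff g))

/-!
Writing `τ` for the coefficient at `1`, we have `|G| ⟨v, w⟩ = τ(v⋆ w)`. Since `τ(xy) = τ(yx)` and
`⋆` is an anti-involution, `|G| ⟨a e, w⟩ = τ(e⋆ a⋆ w) = τ(a⋆ (w e⋆))`, and `τ` is nondegenerate,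
so `w ⊥ ℂ[G]e` iff `w e⋆ = 0`. As `e⋆` is idempotent, this says `w = w (1 - e⋆) ∈ ℂ[G](1 - e⋆)`.
-/

lemma IsIdempotentElem.exists_eq_mul_one_sub_iff {R : Type*} [Ring R] {p : R}
    (hp : IsIdempotentElem p) (w : R) : (∃ a, w = a * (1 - p)) ↔ w * p = 0 := by
  constructor
  · rintro ⟨a, rfl⟩
    rw [mul_assoc, hp.one_sub_mul_self, mul_zero]
  · intro hw
    exact ⟨w, by rw [mul_sub, mul_one, hw, sub_zero]⟩

namespace MonoidAlgebra

variable {R G : Type*} [Group G]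

lemma coeff_one_mul_comm [CommSemiring R] (x y : R[G]) :
    (x * y).coeff 1 = (y * x).coeff 1 := by
  simp only [coeff_mul_apply_left x, coeff_mul_apply_right y, one_mul, mul_one, mul_comm]

lemma eq_zero_of_forall_coeff_one_mul_eq_zero [Semiring R] {x : R[G]}
    (h : ∀ a : R[G], (a * x).coeff 1 = 0) : x = 0 := by
  ext g
  simpa using h (single g⁻¹ 1)

variable [Fintype G]

lemma coeff_mul_eq_sum [Semiring R] (x y : R[G]) (g : G) :
    (x * y).coeff g = ∑ h : G, x.coeff (g * h⁻¹) * y.coeff h := by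
  rw [coeff_mul_apply_right, Finsupp.sum_fintype]
  simp

end MonoidAlgebra

open MonoidAlgebra

section starElt

variable {G : Type*} [Group G] [Fintype G]

lemma starElt_coeff (x : MonoidAlgebra ℂ G) (g : G) :
    (starElt x).coeff g = starRingEnd ℂ (x.coeff g⁻¹) := by
  classical
  simp [starElt, coeff_sum, Finsupp.single_apply, inv_eq_iff_eq_inv]

lemma starElt_starElt (x : MonoidAlgebra ℂ G) : starElt (starElt x) = x := by
  ext g
  simp [starElt_coeff]

lemma starElt_mul (x y : MonoidAlgebra ℂ G) : starElt (x * y) = starElt y * starElt x := by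
  ext g
  rw [starElt_coeff, coeff_mul_eq_sum, coeff_mul_eq_sum, map_sum]
  refine Fintype.sum_equiv (Equiv.mulRight g) _ _ fun h => ?_
  simp only [Equiv.coe_mulRight, starElt_coeff, map_mul, mul_inv_rev, inv_inv, mul_comm]
  congr 2
  group

lemma IsIdempotentElem.starElt {e : MonoidAlgebra ℂ G} (he : IsIdempotentElem e) :
    IsIdempotentElem (starElt e) := by
  rw [IsIdempotentElem, ← starElt_mul, he.eq]

lemma sum_conj_mul_coeff_eq_coeff_one (v w : MonoidAlgebra ℂ G) :
    ∑ g : G, starRingEnd ℂ (v.coeff g) * w.coeff g = (starElt v * w).coeff 1 := by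
  simp [coeff_mul_eq_sum, starElt_coeff]

lemma forall_sum_conj_mul_coeff_eq_zero_iff (e w : MonoidAlgebra ℂ G) :
    (∀ a, ∑ g : G, starRingEnd ℂ ((a * e).coeff g) * w.coeff g = 0) ↔ w * starElt e = 0 := by
  have key (a : MonoidAlgebra ℂ G) : ∑ g : G, starRingEnd ℂ ((a * e).coeff g) * w.coeff g =
      (starElt a * (w * starElt e)).coeff 1 := by
    rw [sum_conj_mul_coeff_eq_coeff_one, starElt_mul, mul_assoc, coeff_one_mul_comm, mul_assoc]
  simp only [key]
  refine ⟨fun h => eq_zero_of_forall_coeff_one_mul_eq_zero fun a => ?_, fun h a => by simp [h]⟩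
  simpa [starElt_starElt] using h (starElt a)

end starElt

/-- For an idempotent `e ∈ ℂ[G]`, the orthogonal complement of the left ideal `ℂ[G]e`
with respect to `⟨v,w⟩ = |G|⁻¹ ∑ conj(v(g)) w(g)` is `ℂ[G](1 − e⋆)`. -/
theorem orthogonal_of_leftIdeal_eq {G : Type*} [Group G] [Fintype G]
    (e : MonoidAlgebra ℂ G) (he : e * e = e) :
    {w : MonoidAlgebra ℂ G | ∀ v : MonoidAlgebra ℂ G,
        (∃ a : MonoidAlgebra ℂ G, v = a * e) →
        (Fintype.card G : ℂ)⁻¹ * ∑ g : G, starRingEnd ℂ (v.coeff g) * w.coeff g = 0}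
      = {w : MonoidAlgebra ℂ G | ∃ a : MonoidAlgebra ℂ G, w = a * (1 - starElt e)} := by
  ext w
  simp only [Set.mem_ofPred_eq, forall_exists_index, forall_eq_apply_imp_iff, mul_eq_zero,
    inv_eq_zero, Nat.cast_eq_zero, Fintype.card_ne_zero, false_or]
  rw [forall_sum_conj_mul_coeff_eq_zero_iff,
    (IsIdempotentElem.starElt he).exists_eq_mul_one_sub_iff]
end

section
/- Let A be a finite set, P an irreducible stochastic matrix on A with stationary distribution μ, f : A → B a surjection, and V(f,P,α) the minimal real subspace of ℝ^A containing the probability distribution α, closed under right multiplication by P, and closed under the coordinate projections Π_b onto each fibre f⁻¹(b). Then μ ∈ V(f,P,α). -/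
open Matrix Finset Filter Topology

lemma GL_pow_nonneg {A : Type*} [Fintype A] [DecidableEq A]
    (P : Matrix A A ℝ) (hP0 : ∀ a a', 0 ≤ P a a') (n : ℕ) :
    ∀ a a', 0 ≤ (P ^ n) a a' := by
  induction n with
  | zero =>
    intro a a'
    by_cases h : a = a' <;> simp [Matrix.one_apply, h]
  | succ n ih =>
    intro a a'
    rw [pow_succ, Matrix.mul_apply]
    exact Finset.sum_nonneg fun k _ => mul_nonneg (ih a k) (hP0 k a')

lemma GL_pow_rowsum {A : Type*} [Fintype A] [DecidableEq A]
    (P : Matrix A A ℝ) (hP1 : ∀ a, ∑ a', P a a' = 1) (n : ℕ) :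
    ∀ a, ∑ a', (P ^ n) a a' = 1 := by
  induction n with
  | zero => intro a; simp [Matrix.one_apply]
  | succ n ih =>
    intro a
    simp only [pow_succ, Matrix.mul_apply]
    rw [Finset.sum_comm]
    calc ∑ k, ∑ a', (P ^ n) a k * P k a'
        = ∑ k, (P ^ n) a k * ∑ a', P k a' := by
          simp [Finset.mul_sum]
      _ = 1 := by simp [hP1, ih a]


lemma GL_vecMul_simplex {A : Type*} [Fintype A] [DecidableEq A]
    (P : Matrix A A ℝ) (hP0 : ∀ a a', 0 ≤ P a a') (hP1 : ∀ a, ∑ a', P a a' = 1)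
    (x : A → ℝ) (hx0 : ∀ a, 0 ≤ x a) (hx1 : ∑ a, x a = 1) :
    (∀ a, 0 ≤ Matrix.vecMul x P a) ∧ ∑ a, Matrix.vecMul x P a = 1 := by
  constructor
  · intro a
    simp only [Matrix.vecMul, dotProduct]
    exact Finset.sum_nonneg fun k _ => mul_nonneg (hx0 k) (hP0 k a)
  · simp only [Matrix.vecMul, dotProduct]
    rw [Finset.sum_comm]
    calc ∑ k, ∑ a, x k * P k a = ∑ k, x k * ∑ a, P k a := by simp [Finset.mul_sum]
      _ = 1 := by simp [hP1, hx1]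

lemma GL_vecMul_pow {A : Type*} [Fintype A] [DecidableEq A]
    (P : Matrix A A ℝ) (x : A → ℝ) (hx : Matrix.vecMul x P = x) (n : ℕ) :
    Matrix.vecMul x (P ^ n) = x := by
  induction n with
  | zero => simp
  | succ n ih => rw [pow_succ, ← Matrix.vecMul_vecMul, ih, hx]

lemma GL_mu_pos {A : Type*} [Fintype A] [DecidableEq A]
    (P : Matrix A A ℝ) (hP0 : ∀ a a', 0 ≤ P a a')
    (hirr : ∀ a a', ∃ n : ℕ, 0 < (P ^ n) a a')
    (μ : A → ℝ) (hμ0 : ∀ a, 0 ≤ μ a) (hμ1 : ∑ a, μ a = 1)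
    (hμP : Matrix.vecMul μ P = μ) : ∀ a, 0 < μ a := by
  obtain ⟨a0, ha0⟩ : ∃ a0, 0 < μ a0 := by
    by_contra h
    push_neg at h
    have : ∑ a, μ a = 0 := le_antisymm (Finset.sum_nonpos fun a _ => h a)
      (Finset.sum_nonneg fun a _ => hμ0 a)
    rw [hμ1] at this; norm_num at this
  intro a
  obtain ⟨n, hn⟩ := hirr a0 a
  have h1 : μ a = ∑ k, μ k * (P ^ n) k a := by
    conv_lhs => rw [← GL_vecMul_pow P μ hμP n]
    simp [Matrix.vecMul, dotProduct]
  rw [h1]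
  have : 0 < μ a0 * (P ^ n) a0 a := mul_pos ha0 hn
  calc (0:ℝ) < μ a0 * (P ^ n) a0 a := this
    _ ≤ ∑ k, μ k * (P ^ n) k a := by
        apply Finset.single_le_sum (f := fun k => μ k * (P ^ n) k a)
        · exact fun k _ => mul_nonneg (hμ0 k) (GL_pow_nonneg P hP0 n k a)
        · exact Finset.mem_univ a0

lemma GL_unique {A : Type*} [Fintype A] [DecidableEq A] [Nonempty A]
    (P : Matrix A A ℝ) (hP0 : ∀ a a', 0 ≤ P a a') (hP1 : ∀ a, ∑ a', P a a' = 1)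
    (hirr : ∀ a a', ∃ n : ℕ, 0 < (P ^ n) a a')
    (μ : A → ℝ) (hμ0 : ∀ a, 0 ≤ μ a) (hμ1 : ∑ a, μ a = 1)
    (hμP : Matrix.vecMul μ P = μ)
    (ν : A → ℝ) (hν0 : ∀ a, 0 ≤ ν a) (hν1 : ∑ a, ν a = 1)
    (hνP : Matrix.vecMul ν P = ν) : ν = μ := by
  have hμpos := GL_mu_pos P hP0 hirr μ hμ0 hμ1 hμP
  obtain ⟨a0, -, ha0⟩ := Finset.exists_min_image Finset.univ (fun a => ν a / μ a)
    ⟨Classical.arbitrary A, Finset.mem_univ _⟩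
  set t : ℝ := ν a0 / μ a0 with ht
  set x : A → ℝ := ν - t • μ with hx
  have hx0 : ∀ a, 0 ≤ x a := by
    intro a
    have h1 : t ≤ ν a / μ a := ha0 a (Finset.mem_univ a)
    have h2 : t * μ a ≤ ν a := (le_div_iff₀ (hμpos a)).mp h1
    simpa [hx, sub_nonneg] using h2
  have hxa0 : x a0 = 0 := by
    have : μ a0 ≠ 0 := ne_of_gt (hμpos a0)
    simp [hx, ht]
    field_simp
    ring
  have hxP : Matrix.vecMul x P = x := by
    rw [hx, Matrix.sub_vecMul, Matrix.smul_vecMul, hμP, hνP]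
  have hxzero : ∀ a, x a = 0 := by
    intro a
    obtain ⟨n, hn⟩ := hirr a a0
    have hstat := GL_vecMul_pow P x hxP n
    have hsum : ∑ k, x k * (P ^ n) k a0 = 0 := by
      have : Matrix.vecMul x (P ^ n) a0 = x a0 := by rw [hstat]
      simpa [Matrix.vecMul, dotProduct, hxa0] using this
    have := (Finset.sum_eq_zero_iff_of_nonneg
      (fun k _ => mul_nonneg (hx0 k) (GL_pow_nonneg P hP0 n k a0))).mp hsum a
      (Finset.mem_univ a)
    rcases mul_eq_zero.mp this with h | h
    · exact h
    · exact absurd h (ne_of_gt hn)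
  have hνt : ν = t • μ := by
    funext a
    have := hxzero a
    simp [hx] at this
    simpa using sub_eq_zero.mp this
  have ht1 : t = 1 := by
    have : ∑ a, ν a = ∑ a, t * μ a := by rw [hνt]; simp
    rw [hν1, ← Finset.mul_sum, hμ1, mul_one] at this
    exact this.symm
  rw [hνt, ht1, one_smul]
/-- Gurvits–Ledoux: for an irreducible stochastic matrix `P` with stationary
distribution `μ`, the stationary distribution `μ` belongs to every subspace `V ⊆ ℝ^A`
that contains the initial distribution `α`, is closed under right multiplication by `P`,
and is closed under the coordinate projections onto each fibre of `f`.  In particular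
`μ ∈ V(f,P,α)`, the minimal such subspace. -/
theorem stationary_mem_minimal_GurvitsLedoux_space
    {A B : Type*} [Fintype A] [DecidableEq A] [Fintype B] [DecidableEq B]
    (P : Matrix A A ℝ) (hP0 : ∀ a a', 0 ≤ P a a') (hP1 : ∀ a, ∑ a', P a a' = 1)
    (hirr : ∀ a a', ∃ n : ℕ, 0 < (P ^ n) a a')
    (f : A → B) (hf : Function.Surjective f)
    (μ : A → ℝ) (hμ0 : ∀ a, 0 ≤ μ a) (hμ1 : ∑ a, μ a = 1)
    (hμP : Matrix.vecMul μ P = μ)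
    (α : A → ℝ) (hα0 : ∀ a, 0 ≤ α a) (hα1 : ∑ a, α a = 1)
    (V : Submodule ℝ (A → ℝ)) (hαV : α ∈ V)
    (hVP : ∀ v ∈ V, Matrix.vecMul v P ∈ V)
    (hVproj : ∀ b : B, ∀ v ∈ V, (fun a => if f a = b then v a else 0) ∈ V) :
    μ ∈ V := by
  have hne : Nonempty A := by
    by_contra h
    rw [not_nonempty_iff] at h
    simp at hα1
  -- the trajectory w i = α P^i
  set w : ℕ → (A → ℝ) := fun i => Matrix.vecMul α (P ^ i) with hw
  have hw0 : w 0 = α := by simp [hw]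
  have hwsucc : ∀ i, w (i + 1) = Matrix.vecMul (w i) P := by
    intro i; simp [hw, pow_succ, ← Matrix.vecMul_vecMul]
  have hwV : ∀ i, w i ∈ V := by
    intro i
    induction i with
    | zero => simpa [hw0] using hαV
    | succ i ih => rw [hwsucc]; exact hVP _ ih
  have hwsimp : ∀ i, (∀ a, 0 ≤ w i a) ∧ ∑ a, w i a = 1 := by
    intro i
    induction i with
    | zero => rw [hw0]; exact ⟨hα0, hα1⟩
    | succ i ih =>
      rw [hwsucc]
      exact GL_vecMul_simplex P hP0 hP1 _ ih.1 ih.2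
  have hwnorm : ∀ i, ‖w i‖ ≤ 1 := by
    intro i
    rw [pi_norm_le_iff_of_nonneg zero_le_one]
    intro a
    rw [Real.norm_eq_abs, abs_of_nonneg ((hwsimp i).1 a)]
    calc w i a ≤ ∑ a', w i a' :=
          Finset.single_le_sum (fun a' _ => (hwsimp i).1 a') (Finset.mem_univ a)
      _ = 1 := (hwsimp i).2
  -- Cesàro averages
  set u : ℕ → (A → ℝ) := fun n => (((n : ℝ) + 1)⁻¹) • ∑ i ∈ Finset.range (n + 1), w i
    with hu
  have huV : ∀ n, u n ∈ V := fun n =>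
    V.smul_mem _ (V.sum_mem fun i _ => hwV i)
  have husimp : ∀ n, u n ∈ stdSimplex ℝ A := by
    intro n
    have hpos : (0:ℝ) < (n : ℝ) + 1 := by positivity
    constructor
    · intro a
      simp only [hu, Pi.smul_apply, smul_eq_mul, Finset.sum_apply]
      exact mul_nonneg (by positivity)
        (Finset.sum_nonneg fun i _ => (hwsimp i).1 a)
    · simp only [hu, Pi.smul_apply, smul_eq_mul, Finset.sum_apply]
      rw [← Finset.mul_sum, Finset.sum_comm]
      have : ∑ i ∈ Finset.range (n + 1), ∑ a, w i a = (n : ℝ) + 1 := by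
        simp [fun i => (hwsimp i).2]
      rw [this, inv_mul_cancel₀ (ne_of_gt hpos)]
  -- compactness
  have hVclosed : IsClosed (V : Set (A → ℝ)) := Submodule.closed_of_finiteDimensional V
  have hK : IsCompact (stdSimplex ℝ A ∩ (V : Set (A → ℝ))) :=
    (isCompact_stdSimplex ℝ A).inter_right hVclosed
  obtain ⟨ν, hνK, φ, hφ, hφt⟩ := hK.tendsto_subseq
    (x := u) (fun n => ⟨husimp n, huV n⟩)
  -- the linear map x ↦ x P is continuous
  set L : (A → ℝ) →ₗ[ℝ] (A → ℝ) :=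
    { toFun := fun x => Matrix.vecMul x P
      map_add' := fun x y => Matrix.add_vecMul P x y
      map_smul' := fun c x => Matrix.smul_vecMul c x P } with hL
  have hLcont : Continuous L := LinearMap.continuous_of_finiteDimensional L
  -- key identity: L (u n) = u n + correction
  have hkey : ∀ n, L (u n) = u n + (((n : ℝ) + 1)⁻¹) • (w (n + 1) - w 0) := by
    intro n
    have h1 : L (u n) = (((n : ℝ) + 1)⁻¹) •
        ∑ i ∈ Finset.range (n + 1), w (i + 1) := by
      rw [hu]
      rw [_root_.map_smul, _root_.map_sum]
      congr 1
      refine Finset.sum_congr rfl fun i _ => ?_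
      show Matrix.vecMul (w i) P = w (i + 1)
      exact (hwsucc i).symm
    have h2 : ∑ i ∈ Finset.range (n + 1), w (i + 1) =
        (∑ i ∈ Finset.range (n + 1), w i) + (w (n + 1) - w 0) := by
      have a1 := Finset.sum_range_succ w (n + 1)
      have a2 := Finset.sum_range_succ' w (n + 1)
      rw [a1] at a2
      calc ∑ i ∈ Finset.range (n + 1), w (i + 1)
          = (∑ i ∈ Finset.range (n + 1), w (i + 1) + w 0) - w 0 := by abel
        _ = (∑ i ∈ Finset.range (n + 1), w i + w (n + 1)) - w 0 := by rw [← a2]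
        _ = ∑ i ∈ Finset.range (n + 1), w i + (w (n + 1) - w 0) := by abel
    rw [h1, h2, smul_add]
  -- the correction tends to 0 along the subsequence
  have hcorr : Filter.Tendsto
      (fun k => (((φ k : ℝ) + 1)⁻¹) • (w (φ k + 1) - w 0)) Filter.atTop (nhds 0) := by
    have htend : Filter.Tendsto (fun k : ℕ => 2 * ((k : ℝ) + 1)⁻¹) Filter.atTop (nhds 0) := by
      have h0 : Filter.Tendsto (fun k : ℕ => ((k : ℝ) + 1)⁻¹) Filter.atTop (nhds 0) := by
        apply Filter.Tendsto.inv_tendsto_atTop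
        exact Filter.tendsto_atTop_add_const_right _ 1 tendsto_natCast_atTop_atTop
      simpa using h0.const_mul 2
    have hbd : ∀ k : ℕ, ‖(((φ k : ℝ) + 1)⁻¹) • (w (φ k + 1) - w 0)‖ ≤ 2 * ((k : ℝ) + 1)⁻¹ := by
      intro k
      have hb : ‖w (φ k + 1) - w 0‖ ≤ 2 := by
        calc ‖w (φ k + 1) - w 0‖ ≤ ‖w (φ k + 1)‖ + ‖w 0‖ := norm_sub_le _ _
          _ ≤ 1 + 1 := add_le_add (hwnorm _) (hwnorm _)
          _ = 2 := by norm_num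
      have hk1 : (k : ℝ) + 1 ≤ (φ k : ℝ) + 1 := by
        have h : k ≤ φ k := hφ.le_apply
        have : (k : ℝ) ≤ (φ k : ℝ) := Nat.cast_le.mpr h
        linarith
      calc ‖(((φ k : ℝ) + 1)⁻¹) • (w (φ k + 1) - w 0)‖
          = ((φ k : ℝ) + 1)⁻¹ * ‖w (φ k + 1) - w 0‖ := by
            rw [norm_smul, Real.norm_eq_abs, abs_of_nonneg (by positivity)]
        _ ≤ ((k : ℝ) + 1)⁻¹ * 2 := by
            apply mul_le_mul _ hb (norm_nonneg _) (by positivity)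
            exact inv_anti₀ (by positivity) hk1
        _ = 2 * ((k : ℝ) + 1)⁻¹ := by ring
    exact squeeze_zero_norm hbd htend
  -- ν is stationary
  have hνstat : Matrix.vecMul ν P = ν := by
    have h1 : Filter.Tendsto (fun k => L (u (φ k))) Filter.atTop (nhds (L ν)) :=
      (hLcont.tendsto ν).comp hφt
    have h2 : Filter.Tendsto (fun k => L (u (φ k))) Filter.atTop (nhds (ν + 0)) := by
      have := hφt.add hcorr
      apply this.congr
      intro k
      exact (hkey (φ k)).symm
    have := tendsto_nhds_unique h1 h2
    rw [add_zero] at this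
    simpa [hL] using this
  -- conclude via uniqueness
  obtain ⟨⟨hν0, hν1⟩, hνV⟩ := hνK
  have := GL_unique P hP0 hP1 hirr μ hμ0 hμ1 hμP ν hν0 hν1 hνstat
  rwa [← this]
end

section
/- Let A be a finite set, P a stochastic matrix on A, f : A → B a surjection with induced map F, and suppose U and W are subspaces of ℝ^A each satisfying: they contain a common stationary distribution μ of P with μ(f⁻¹(b)) > 0 for all b ∈ B, UP ⊆ U, WP ⊆ W, UΠ_b ⊆ U and WΠ_b ⊆ W for all b, and U°PF = 0 and W°PF = 0 (where X° = X ∩ ker F). Then the sum U + W also satisfies (U+W)P ⊆ U+W, (U+W)Π_b ⊆ U+W, and (U+W)°PF = 0. -/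
/-- Stability of the Gurvits–Ledoux conditions under sums: if `U` and `W` are subspaces
of `ℝ^A` each containing a stationary distribution `μ` of the stochastic matrix `P`
with `μ(f⁻¹(b)) > 0` for all `b`, each closed under `P` and under the fibre projections
`Π_b`, and each satisfying `X°PF = 0` (where `X° = X ∩ ker F`), then `U + W` is closed
under `P` and under the projections `Π_b`, and `(U+W)°PF = 0`. -/
theorem sum_of_stable_spaces {A B : Type*} [Fintype A] [Fintype B] [DecidableEq B]
    (P : Matrix A A ℝ) (hP0 : ∀ a a', 0 ≤ P a a') (hP1 : ∀ a, ∑ a', P a a' = 1)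
    (f : A → B) (hf : Function.Surjective f)
    (F : Matrix A B ℝ) (hF : F = Matrix.of fun a b => if f a = b then (1 : ℝ) else 0)
    (μ : A → ℝ) (hμ0 : ∀ a, 0 ≤ μ a) (hμP : Matrix.vecMul μ P = μ)
    (hμpos : ∀ b : B, 0 < ∑ a ∈ Finset.univ.filter (fun a => f a = b), μ a)
    (U W : Submodule ℝ (A → ℝ)) (hμU : μ ∈ U) (hμW : μ ∈ W)
    (hUP : ∀ v ∈ U, Matrix.vecMul v P ∈ U) (hWP : ∀ v ∈ W, Matrix.vecMul v P ∈ W)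
    (hUproj : ∀ b : B, ∀ v ∈ U, (fun a => if f a = b then v a else 0) ∈ U)
    (hWproj : ∀ b : B, ∀ v ∈ W, (fun a => if f a = b then v a else 0) ∈ W)
    (hUcirc : ∀ v ∈ U, Matrix.vecMul v F = 0 → Matrix.vecMul (Matrix.vecMul v P) F = 0)
    (hWcirc : ∀ v ∈ W, Matrix.vecMul v F = 0 → Matrix.vecMul (Matrix.vecMul v P) F = 0) :
    (∀ v ∈ U ⊔ W, Matrix.vecMul v P ∈ U ⊔ W) ∧
    (∀ b : B, ∀ v ∈ U ⊔ W, (fun a => if f a = b then v a else 0) ∈ U ⊔ W) ∧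
    (∀ v ∈ U ⊔ W, Matrix.vecMul v F = 0 → Matrix.vecMul (Matrix.vecMul v P) F = 0) := by
  have keyF : ∀ v : A → ℝ, ∀ b, Matrix.vecMul v F b
      = ∑ a ∈ Finset.univ.filter (fun a => f a = b), v a := by
    intro v b
    rw [Finset.sum_filter]
    simp only [Matrix.vecMul, dotProduct, hF, Matrix.of_apply]
    congr 1; funext a; split <;> simp
  refine ⟨?_, ?_, ?_⟩
  · intro v hv
    rcases Submodule.mem_sup.mp hv with ⟨u, hu, w, hw, rfl⟩
    rw [Matrix.add_vecMul]
    exact Submodule.mem_sup.mpr ⟨_, hUP u hu, _, hWP w hw, rfl⟩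
  · intro b v hv
    rcases Submodule.mem_sup.mp hv with ⟨u, hu, w, hw, rfl⟩
    refine Submodule.mem_sup.mpr ⟨_, hUproj b u hu, _, hWproj b w hw, ?_⟩
    funext a; by_cases h : f a = b <;> simp [h]
  · intro v hv hvF
    rcases Submodule.mem_sup.mp hv with ⟨u, hu, w, hw, rfl⟩
    set c : B → ℝ := fun b => ∑ a ∈ Finset.univ.filter (fun a => f a = b), u a with hc
    set m : B → ℝ := fun b => ∑ a ∈ Finset.univ.filter (fun a => f a = b), μ a with hm
    have hmne : ∀ b, m b ≠ 0 := fun b => (hμpos b).ne'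
    set x : A → ℝ := ∑ b : B, (c b / m b) • (fun a => if f a = b then μ a else 0) with hx
    have hxU : x ∈ U := Submodule.sum_mem _ fun b _ =>
      Submodule.smul_mem _ _ (hUproj b μ hμU)
    have hxW : x ∈ W := Submodule.sum_mem _ fun b _ =>
      Submodule.smul_mem _ _ (hWproj b μ hμW)
    have hxa : ∀ a, x a = (c (f a) / m (f a)) * μ a := by
      intro a
      rw [hx]
      rw [Finset.sum_apply]
      rw [Finset.sum_eq_single (f a)]
      · simp
      · intro b _ hb
        simp [Ne.symm hb]
      · simp
    have hxF : ∀ b, Matrix.vecMul x F b = c b := by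
      intro b
      rw [keyF]
      have : ∀ a ∈ Finset.univ.filter (fun a => f a = b),
          x a = (c b / m b) * μ a := by
        intro a ha
        rw [hxa, (Finset.mem_filter.mp ha).2]
      rw [Finset.sum_congr rfl this, ← Finset.mul_sum]
      exact div_mul_cancel₀ _ (hmne b)
    have huxF : Matrix.vecMul (u - x) F = 0 := by
      funext b
      rw [Matrix.sub_vecMul]
      simp only [Pi.sub_apply, Pi.zero_apply]
      rw [hxF, keyF]
      exact sub_self (c b)
    have hwxF : Matrix.vecMul (w + x) F = 0 := by
      funext b
      rw [Matrix.add_vecMul]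
      simp only [Pi.add_apply, Pi.zero_apply]
      have hv0 : Matrix.vecMul (u + w) F b = 0 := by rw [hvF]; rfl
      rw [Matrix.add_vecMul] at hv0
      simp only [Pi.add_apply] at hv0
      rw [hxF]
      have : Matrix.vecMul u F b = c b := by rw [keyF]
      linarith
    have h1 := hUcirc (u - x) (Submodule.sub_mem _ hu hxU) huxF
    have h2 := hWcirc (w + x) (Submodule.add_mem _ hw hxW) hwxF
    have : u + w = (u - x) + (w + x) := by ring
    rw [this, Matrix.add_vecMul, Matrix.add_vecMul, h1, h2, add_zero]
end

section
/- Let B_d be the algebra of lower triangular d×d complex matrices. If L is a left ideal of Mat_d(ℂ) whose right idealizer {M : LM ⊆ L} contains B_d, then L is an initial column span, i.e. L = Mat_d(ℂ)·e for e = diag(1,…,1,0,…,0) for some number r of ones. -/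
open Matrix

/-- If `L` is a left ideal of `Mat_d(ℂ)` whose right idealizer contains the algebra
`B_d` of lower triangular matrices, then `L` is an initial column span:
`L = Mat_d(ℂ)·e` for `e = diag(1,…,1,0,…,0)` with some number `r` of ones. -/
theorem leftIdeal_of_borel_in_idealizer_is_initial_column_span {d : ℕ}
    (L : Ideal (Matrix (Fin d) (Fin d) ℂ))
    (h : ∀ M : Matrix (Fin d) (Fin d) ℂ, (∀ i j : Fin d, i < j → M i j = 0) →
      ∀ l ∈ L, l * M ∈ L) :
    ∃ r : ℕ, L = Ideal.span
      {Matrix.diagonal (fun i : Fin d => if (i : ℕ) < r then (1 : ℂ) else 0)} := by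
  classical
  -- the set of "active" columns
  set P : Fin d → Prop := fun j => ∃ l ∈ L, ∃ i, l i j ≠ 0 with hP
  set S : Finset (Fin d) := Finset.univ.filter P with hS
  -- P is downward closed
  have hdown : ∀ j, P j → ∀ k : Fin d, k ≤ j → P k := by
    rintro j ⟨l, hl, i, hlij⟩ k hkj
    have hlow : ∀ a b : Fin d, a < b → (single j k (1:ℂ)) a b = 0 := by
      intro a b hab
      rcases eq_or_ne a j with rfl | ha
      · rcases eq_or_ne b k with rfl | hb
        · exact absurd (lt_of_lt_of_le hab hkj) (lt_irrefl _)
        · exact Matrix.single_apply_of_col_ne _ _ hb.symm _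
      · exact Matrix.single_apply_of_row_ne ha.symm _ _ _
    refine ⟨l * single j k (1:ℂ), h _ hlow l hl, i, ?_⟩
    simpa using hlij
  set r : ℕ := if hne : S.Nonempty then ((S.max' hne : Fin d) : ℕ) + 1 else 0 with hr
  have hPr : ∀ j : Fin d, P j ↔ (j : ℕ) < r := by
    intro j
    constructor
    · intro hj
      have hjS : j ∈ S := by simp [hS, hj]
      have hne : S.Nonempty := ⟨j, hjS⟩
      have := S.le_max' j hjS
      simp only [hr, dif_pos hne]
      omega
    · intro hj
      by_cases hne : S.Nonempty
      · simp only [hr, dif_pos hne] at hj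
        have hmax : P (S.max' hne) := by
          have := S.max'_mem hne
          simpa [hS] using this
        exact hdown _ hmax j (by exact_mod_cast Nat.lt_succ_iff.mp hj)
      · simp [hr, dif_neg hne] at hj
  -- basis matrices with active column are in L
  have hstd : ∀ (i k : Fin d), P k → single i k (1:ℂ) ∈ L := by
    rintro i k ⟨l, hl, a, hla⟩
    have h1 : single i a (1:ℂ) * l ∈ L := Ideal.mul_mem_left _ _ hl
    have hlow : ∀ x y : Fin d, x < y → (single k k (1:ℂ)) x y = 0 := by
      intro x y hxy
      rcases eq_or_ne x k with rfl | hx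
      · exact Matrix.single_apply_of_col_ne _ _ (ne_of_lt hxy) _
      · exact Matrix.single_apply_of_row_ne hx.symm _ _ _
    have h2 : single i a (1:ℂ) * l * single k k (1:ℂ) ∈ L :=
      h _ hlow _ h1
    have h3 : ((l a k)⁻¹ • (1 : Matrix (Fin d) (Fin d) ℂ)) *
        (single i a (1:ℂ) * l * single k k (1:ℂ)) ∈ L :=
      Ideal.mul_mem_left _ _ h2
    rw [smul_mul_assoc, one_mul] at h3
    have heq : (l a k)⁻¹ • (single i a (1:ℂ) * l * single k k (1:ℂ))
        = single i k (1:ℂ) := by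
      ext x y
      rcases eq_or_ne y k with rfl | hy
      · rcases eq_or_ne x i with rfl | hx
        · simp [Matrix.smul_apply, inv_mul_cancel₀ hla]
        · simp [Matrix.smul_apply, Matrix.single_mul_apply_of_ne (h := hx),
            Matrix.single_apply_of_row_ne hx.symm]
      · simp [Matrix.smul_apply, Matrix.mul_single_apply_of_ne (hbj := hy),
          Matrix.single_apply_of_col_ne _ _ hy.symm]
    rw [heq] at h3; exact h3
  refine ⟨r, le_antisymm ?_ ?_⟩
  · intro l hl
    have hle : l = l * Matrix.diagonal (fun i : Fin d => if (i : ℕ) < r then (1:ℂ) else 0) := by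
      ext i j
      rw [Matrix.mul_diagonal]
      by_cases hj : (j : ℕ) < r
      · simp [hj]
      · have : ¬ P j := fun hp => hj ((hPr j).mp hp)
        have hz : l i j = 0 := by
          by_contra hc
          exact this ⟨l, hl, i, hc⟩
        simp [hj, hz]
    rw [hle]
    exact Ideal.mul_mem_left _ _ (Ideal.subset_span rfl)
  · rw [Ideal.span_le, Set.singleton_subset_iff]
    have heq : Matrix.diagonal (fun i : Fin d => if (i : ℕ) < r then (1:ℂ) else 0)
        = ∑ j : Fin d, if (j : ℕ) < r then single j j (1:ℂ) else 0 := by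
      ext x y
      rw [Matrix.sum_apply]
      rcases eq_or_ne x y with rfl | hxy
      · rw [Finset.sum_eq_single x]
        · by_cases hx : (x : ℕ) < r <;> simp [Matrix.diagonal_apply_eq, hx]
        · intro b _ hb
          by_cases hb' : (b : ℕ) < r <;>
            simp [hb', Matrix.single_apply_of_row_ne hb]
        · simp
      · rw [Finset.sum_eq_zero]
        · simp [Matrix.diagonal_apply_ne _ hxy]
        · intro b _
          rcases eq_or_ne b x with rfl | hb
          · by_cases hb' : ((b : Fin d) : ℕ) < r <;>
              simp [hb', Matrix.single_apply_of_col_ne _ _ hxy]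
          · by_cases hb' : (b : ℕ) < r <;>
              simp [hb', Matrix.single_apply_of_row_ne hb]
    rw [heq]
    refine Submodule.sum_mem _ fun j _ => ?_
    by_cases hj : (j : ℕ) < r
    · simpa [hj] using hstd j j ((hPr j).mpr hj)
    · simp [hj]
end
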